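/- Distribution of ∃p over separated conjunctions: let P be a past formula, C an introspective formula, and F a future formula of ITLNL. Then ∃p (P ∧ C ∧ F) ≡ (∃p P) ∧ (∃p C) ∧ (∃p F) is valid, because for a reference interval [i,j], the truth of P depends only on σ|_{(−∞,i]}, the truth of C only on σ|_{[i,j]}, and the truth of F only on σ|_{[j,∞)}. -/
import Mathlib


/-- Formulas of ITLNL: ITL extended with the neighbourhood modalities `◇_l`, `◇_r`. -/
inductive ITLNL (V : Type) : Type
  | bot : ITLNL V
  | var : V → ITLNL V
  | imp : ITLNL V → ITLNL V → ITLNL V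
  | next : ITLNL V → ITLNL V
  | chop : ITLNL V → ITLNL V → ITLNL V
  | star : ITLNL V → ITLNL V
  | diaL : ITLNL V → ITLNL V
  | diaR : ITLNL V → ITLNL V

namespace ITLNL

variable {V : Type}

/-- Satisfaction `σ,i,j ⊨ A` for `σ : ℤ → Set V` and reference intervals `[i,j]`, `i ≤ j`. -/
def Sat (σ : ℤ → Set V) : ℤ → ℤ → ITLNL V → Prop
  | _, _, bot => False
  | i, _, var p => p ∈ σ i
  | i, j, imp A B => Sat σ i j A → Sat σ i j B
  | i, j, next A => i < j ∧ Sat σ (i + 1) j A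
  | i, j, chop A B => ∃ k, i ≤ k ∧ k ≤ j ∧ Sat σ i k A ∧ Sat σ k j B
  | i, j, star A => i = j ∨ ∃ (N : ℕ) (f : ℕ → ℤ), f 0 = i ∧ f N = j ∧
      (∀ n < N, f n < f (n + 1)) ∧ ∀ n < N, Sat σ (f n) (f (n + 1)) A
  | i, _, diaL A => ∃ k, k ≤ i ∧ Sat σ k i A
  | _, j, diaR A => ∃ k, j ≤ k ∧ Sat σ j k A

def top : ITLNL V := imp bot bot
def neg (A : ITLNL V) : ITLNL V := imp A bot
def or' (A B : ITLNL V) : ITLNL V := imp (neg A) B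
def and' (A B : ITLNL V) : ITLNL V := neg (imp A (neg B))
def iff' (A B : ITLNL V) : ITLNL V := and' (imp A B) (imp B A)
def empty : ITLNL V := neg (next top)
def skip : ITLNL V := next empty
def boxL (A : ITLNL V) : ITLNL V := neg (diaL (neg A))
def boxR (A : ITLNL V) : ITLNL V := neg (diaR (neg A))
/-- The universal-access diamond `◇_a := ◇_r◇_r◇_l◇_l`. -/
def diaA (A : ITLNL V) : ITLNL V := diaR (diaR (diaL (diaL A)))
/-- The universal modality `□_a := ¬◇_a¬`. -/
def boxA (A : ITLNL V) : ITLNL V := neg (diaA (neg A))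

def bigOr : List (ITLNL V) → ITLNL V
  | [] => bot
  | A :: l => or' A (bigOr l)

def bigAnd : List (ITLNL V) → ITLNL V
  | [] => top
  | A :: l => and' A (bigAnd l)

def Valid (A : ITLNL V) : Prop := ∀ (σ : ℤ → Set V) (i j : ℤ), i ≤ j → Sat σ i j A

/-- The set of propositional variables occurring in a formula. -/
def vars : ITLNL V → Set V
  | bot => ∅
  | var p => {p}
  | imp A B => vars A ∪ vars B
  | next A => vars A
  | chop A B => vars A ∪ vars B
  | star A => vars A
  | diaL A => vars A
  | diaR A => vars A

/-- Semantics of existential propositional quantification `∃p A`. -/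
def SatEx (p : V) (A : ITLNL V) (σ : ℤ → Set V) (i j : ℤ) : Prop :=
  ∃ σ' : ℤ → Set V, (∀ k : ℤ, σ k \ {p} = σ' k \ {p}) ∧ Sat σ' i j A

end ITLNL

namespace ITLNL

variable {V : Type}

/-- Introspective (i.e., pure ITL) formulas: no neighbourhood modalities. -/
def Introspective : ITLNL V → Prop
  | bot => True
  | var _ => True
  | imp A B => Introspective A ∧ Introspective B
  | next A => Introspective A
  | chop A B => Introspective A ∧ Introspective B
  | star A => Introspective A
  | diaL _ => False
  | diaR _ => False

/-- Future formulas: `F ::= C | ¬F | F ∨ F | ◇_r F` with `C` introspective. -/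
inductive IsFuture : ITLNL V → Prop
  | introspective {A : ITLNL V} : Introspective A → IsFuture A
  | not {A : ITLNL V} : IsFuture A → IsFuture (neg A)
  | or {A B : ITLNL V} : IsFuture A → IsFuture B → IsFuture (or' A B)
  | diaR {A : ITLNL V} : IsFuture A → IsFuture (diaR A)

/-- Past formulas: `P ::= C | ¬P | P ∨ P | ◇_l P` with `C` introspective. -/
inductive IsPast : ITLNL V → Prop
  | introspective {A : ITLNL V} : Introspective A → IsPast A
  | not {A : ITLNL V} : IsPast A → IsPast (neg A)
  | or {A B : ITLNL V} : IsPast A → IsPast B → IsPast (or' A B)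
  | diaL {A : ITLNL V} : IsPast A → IsPast (diaL A)

end ITLNL

open ITLNL

namespace ITLNL

variable {V : Type}

lemma chain_mono {f : ℕ → ℤ} {N : ℕ} (hf : ∀ n < N, f n < f (n + 1)) :
    ∀ m n, m ≤ n → n ≤ N → f m ≤ f n := by
  intro m n
  induction n with
  | zero => intro hmn _; rw [Nat.le_zero.mp hmn]
  | succ k ih =>
    intro hmn hnN
    rcases Nat.eq_or_lt_of_le hmn with rfl | h
    · exact le_refl _
    · exact le_trans (ih (Nat.lt_succ_iff.mp h) (by omega)) (le_of_lt (hf k hnN))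

lemma sat_introspective_congr {A : ITLNL V} (hA : Introspective A) :
    ∀ (σ σ' : ℤ → Set V) (i j : ℤ), i ≤ j → (∀ k, i ≤ k → k ≤ j → σ k = σ' k) →
      (Sat σ i j A ↔ Sat σ' i j A) := by
  induction A with
  | bot => intro σ σ' i j _ _; rfl
  | var q => intro σ σ' i j hij h; simp only [Sat]; rw [h i le_rfl hij]
  | imp A B ihA ihB =>
    intro σ σ' i j hij h
    exact imp_congr (ihA hA.1 σ σ' i j hij h) (ihB hA.2 σ σ' i j hij h)
  | next A ih =>
    intro σ σ' i j hij h
    simp only [Sat]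
    constructor
    · rintro ⟨hlt, hs⟩
      exact ⟨hlt, (ih hA σ σ' (i+1) j hlt (fun k hk₁ hk₂ => h k (by omega) hk₂)).mp hs⟩
    · rintro ⟨hlt, hs⟩
      exact ⟨hlt, (ih hA σ σ' (i+1) j hlt (fun k hk₁ hk₂ => h k (by omega) hk₂)).mpr hs⟩
  | chop A B ihA ihB =>
    intro σ σ' i j hij h
    simp only [Sat]
    constructor
    · rintro ⟨k, hik, hkj, hA', hB'⟩
      exact ⟨k, hik, hkj,
        (ihA hA.1 σ σ' i k hik (fun l h1 h2 => h l h1 (le_trans h2 hkj))).mp hA',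
        (ihB hA.2 σ σ' k j hkj (fun l h1 h2 => h l (le_trans hik h1) h2)).mp hB'⟩
    · rintro ⟨k, hik, hkj, hA', hB'⟩
      exact ⟨k, hik, hkj,
        (ihA hA.1 σ σ' i k hik (fun l h1 h2 => h l h1 (le_trans h2 hkj))).mpr hA',
        (ihB hA.2 σ σ' k j hkj (fun l h1 h2 => h l (le_trans hik h1) h2)).mpr hB'⟩
  | star A ih =>
    intro σ σ' i j hij h
    simp only [Sat]
    have key : ∀ (τ τ' : ℤ → Set V), (∀ k, i ≤ k → k ≤ j → τ k = τ' k) →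
        (i = j ∨ ∃ (N : ℕ) (f : ℕ → ℤ), f 0 = i ∧ f N = j ∧
          (∀ n < N, f n < f (n + 1)) ∧ ∀ n < N, Sat τ (f n) (f (n + 1)) A) →
        (i = j ∨ ∃ (N : ℕ) (f : ℕ → ℤ), f 0 = i ∧ f N = j ∧
          (∀ n < N, f n < f (n + 1)) ∧ ∀ n < N, Sat τ' (f n) (f (n + 1)) A) := by
      intro τ τ' hττ' hsat
      rcases hsat with rfl | ⟨N, f, hf0, hfN, hmono, hsat⟩
      · exact Or.inl rfl
      · refine Or.inr ⟨N, f, hf0, hfN, hmono, fun n hn => ?_⟩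
        have h1 : i ≤ f n := hf0 ▸ chain_mono hmono 0 n (Nat.zero_le _) (le_of_lt hn)
        have h2 : f (n+1) ≤ j := hfN ▸ chain_mono hmono (n+1) N hn le_rfl
        have h3 : f n < f (n+1) := hmono n hn
        exact (ih hA τ τ' (f n) (f (n+1)) (le_of_lt h3)
          (fun l hl1 hl2 => hττ' l (le_trans h1 hl1) (le_trans hl2 h2))).mp (hsat n hn)
    exact ⟨key σ σ' h, key σ' σ (fun k h1 h2 => (h k h1 h2).symm)⟩
  | diaL A ih => exact absurd hA (by simp [Introspective])
  | diaR A ih => exact absurd hA (by simp [Introspective])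

lemma sat_past_congr {σ σ' : ℤ → Set V} {A : ITLNL V} (hA : IsPast A) :
    ∀ i j : ℤ, i ≤ j → (∀ k, k ≤ j → σ k = σ' k) →
      (Sat σ i j A ↔ Sat σ' i j A) := by
  induction hA with
  | introspective h =>
    intro i j hij hagree
    exact sat_introspective_congr h _ _ i j hij (fun k h1 h2 => hagree k h2)
  | not _ ih =>
    intro i j hij hagree
    exact imp_congr (ih i j hij hagree) Iff.rfl
  | or _ _ ihA ihB =>
    intro i j hij hagree
    exact imp_congr (imp_congr (ihA i j hij hagree) Iff.rfl) (ihB i j hij hagree)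
  | diaL _ ih =>
    intro i j hij hagree
    simp only [Sat]
    constructor
    · rintro ⟨k, hki, hs⟩
      exact ⟨k, hki, (ih k i hki (fun l hl => hagree l (le_trans hl hij))).mp hs⟩
    · rintro ⟨k, hki, hs⟩
      exact ⟨k, hki, (ih k i hki (fun l hl => hagree l (le_trans hl hij))).mpr hs⟩

lemma sat_future_congr {σ σ' : ℤ → Set V} {A : ITLNL V} (hA : IsFuture A) :
    ∀ i j : ℤ, i ≤ j → (∀ k, i ≤ k → σ k = σ' k) →
      (Sat σ i j A ↔ Sat σ' i j A) := by
  induction hA with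
  | introspective h =>
    intro i j hij hagree
    exact sat_introspective_congr h _ _ i j hij (fun k h1 h2 => hagree k h1)
  | not _ ih =>
    intro i j hij hagree
    exact imp_congr (ih i j hij hagree) Iff.rfl
  | or _ _ ihA ihB =>
    intro i j hij hagree
    exact imp_congr (imp_congr (ihA i j hij hagree) Iff.rfl) (ihB i j hij hagree)
  | diaR _ ih =>
    intro i j hij hagree
    simp only [Sat]
    constructor
    · rintro ⟨k, hjk, hs⟩
      exact ⟨k, hjk, (ih j k hjk (fun l hl => hagree l (le_trans hij hl))).mp hs⟩
    · rintro ⟨k, hjk, hs⟩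
      exact ⟨k, hjk, (ih j k hjk (fun l hl => hagree l (le_trans hij hl))).mpr hs⟩

lemma sat_skip {σ : ℤ → Set V} {m i : ℤ} : Sat σ m i skip ↔ i = m + 1 := by
  simp only [skip, empty, neg, top, Sat]
  constructor
  · rintro ⟨h1, h2⟩
    by_contra hne
    exact h2 ⟨by omega, fun h => h⟩
  · rintro rfl
    exact ⟨by omega, fun ⟨h, _⟩ => by omega⟩

lemma sat_strictPast_congr {σ σ' : ℤ → Set V} {A : ITLNL V} (hA : IsPast A)
    {i j : ℤ} (hagree : ∀ k, k < i → σ k = σ' k) :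
    Sat σ i j (diaL (chop A skip)) ↔ Sat σ' i j (diaL (chop A skip)) := by
  simp only [Sat]
  constructor <;> rintro ⟨k, hki, m, hkm, hmi, hA', hsk⟩
  · have hm : i = m + 1 := by
      rcases hsk with ⟨h1, h2⟩
      by_contra hne
      exact h2 ⟨by omega, fun h => h⟩
    exact ⟨k, hki, m, hkm, hmi,
      (sat_past_congr hA k m hkm (fun l hl => hagree l (by omega))).mp hA', hsk⟩
  · have hm : i = m + 1 := by
      rcases hsk with ⟨h1, h2⟩
      by_contra hne
      exact h2 ⟨by omega, fun h => h⟩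
    exact ⟨k, hki, m, hkm, hmi,
      (sat_past_congr hA k m hkm (fun l hl => hagree l (by omega))).mpr hA', hsk⟩

lemma sat_strictFuture_congr {σ σ' : ℤ → Set V} {A : ITLNL V} (hA : IsFuture A)
    {i j : ℤ} (hagree : ∀ k, j < k → σ k = σ' k) :
    Sat σ i j (diaR (chop skip A)) ↔ Sat σ' i j (diaR (chop skip A)) := by
  simp only [Sat]
  constructor <;> rintro ⟨k, hjk, m, hjm, hmk, hsk, hA'⟩
  · have hm : m = j + 1 := by
      rcases hsk with ⟨h1, h2⟩
      by_contra hne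
      exact h2 ⟨by omega, fun h => h⟩
    exact ⟨k, hjk, m, hjm, hmk, hsk,
      (sat_future_congr hA m k hmk (fun l hl => hagree l (by omega))).mp hA'⟩
  · have hm : m = j + 1 := by
      rcases hsk with ⟨h1, h2⟩
      by_contra hne
      exact h2 ⟨by omega, fun h => h⟩
    exact ⟨k, hjk, m, hjm, hmk, hsk,
      (sat_future_congr hA m k hmk (fun l hl => hagree l (by omega))).mpr hA'⟩

lemma sat_and' {σ : ℤ → Set V} {i j : ℤ} {A B : ITLNL V} :
    Sat σ i j (and' A B) ↔ Sat σ i j A ∧ Sat σ i j B := by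
  simp only [and', neg, Sat]
  tauto

end ITLNL

/-- for a strictly past `P = ◇_l(P₀;Skip)`, an introspective `C` and a
strictly future `F = ◇_r(Skip;F₀)`, `∃p (P ∧ C ∧ F) ≡ (∃p P) ∧ (∃p C) ∧ (∃p F)` is valid. -/
theorem exists_distributes_over_separated {V : Type} (p : V) (P₀ C F₀ : ITLNL V)
    (hP : IsPast P₀) (hC : Introspective C) (hF : IsFuture F₀) :
    ∀ (σ : ℤ → Set V) (i j : ℤ), i ≤ j →
      (SatEx p (and' (and' (diaL (chop P₀ skip)) C) (diaR (chop skip F₀))) σ i j ↔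
        SatEx p (diaL (chop P₀ skip)) σ i j ∧ SatEx p C σ i j ∧
          SatEx p (diaR (chop skip F₀)) σ i j) := by
  intro σ i j hij
  constructor
  · rintro ⟨σ', hag, hs⟩
    rw [sat_and', sat_and'] at hs
    exact ⟨⟨σ', hag, hs.1.1⟩, ⟨σ', hag, hs.1.2⟩, ⟨σ', hag, hs.2⟩⟩
  · rintro ⟨⟨σ₁, h₁, hs₁⟩, ⟨σ₂, h₂, hs₂⟩, ⟨σ₃, h₃, hs₃⟩⟩
    refine ⟨fun k => if k < i then σ₁ k else if k ≤ j then σ₂ k else σ₃ k, ?_, ?_⟩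
    · intro k
      by_cases hk1 : k < i
      · simp only [if_pos hk1]; exact h₁ k
      · by_cases hk2 : k ≤ j
        · simp only [if_neg hk1, if_pos hk2]; exact h₂ k
        · simp only [if_neg hk1, if_neg hk2]; exact h₃ k
    · rw [sat_and', sat_and']
      refine ⟨⟨?_, ?_⟩, ?_⟩
      · exact (sat_strictPast_congr hP (σ' := _)
          (fun k hk => by simp only [if_pos hk])).mp hs₁
      · exact (sat_introspective_congr hC _ _ i j hij
          (fun k hk1 hk2 => by simp only [if_neg (by omega : ¬ k < i), if_pos hk2])).mp hs₂
      · exact (sat_strictFuture_congr hF (σ' := _)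
          (fun k hk => by
            simp only [if_neg (by omega : ¬ k < i), if_neg (by omega : ¬ k ≤ j)])).mp hs₃
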